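/- Let α > 0, C > 0 and 0 < X < C, and set Ā₁ = ((C − X)/2)·(1 + √(1 + 8α/(C − X)²)) and L̄ = C·X/(X + Ā₁). Then C·X/(C + √(2α)) < L̄ < X. -/

import Mathlib

/-! Write `c = C - X` for the capacity left to TCP. The stationary TCP rate `A = Ā₁` is the
positive root of `A (A - c) = 2α`, so `A > c`, and then `(A - c)² < A (A - c) = 2α` gives
`A < c + √(2α)`. Since `L̄ = C X / (X + A)` with `C = X + c`, these two bounds on `A` are
exactly the two bounds on `L̄`. -/

namespace LQF

variable {α c : ℝ}

noncomputable def tcpRate (α c : ℝ) : ℝ :=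
  c / 2 * (1 + Real.sqrt (1 + 8 * α / c ^ 2))

lemma tcpRate_pos (hc : 0 < c) : 0 < tcpRate α c := by
  unfold tcpRate
  positivity

lemma tcpRate_mul_sub_self (hc : 0 < c) (hα : 0 ≤ α) :
    tcpRate α c * (tcpRate α c - c) = 2 * α := by
  unfold tcpRate
  set s := Real.sqrt (1 + 8 * α / c ^ 2)
  have hs : s ^ 2 = 1 + 8 * α / c ^ 2 := Real.sq_sqrt (by positivity)
  calc c / 2 * (1 + s) * (c / 2 * (1 + s) - c)
      = c ^ 2 / 4 * (s ^ 2 - 1) := by ring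
    _ = 2 * α := by rw [hs]; field_simp; ring

lemma lt_tcpRate (hc : 0 < c) (hα : 0 < α) : c < tcpRate α c := by
  have hprod : 0 < tcpRate α c * (tcpRate α c - c) := by
    rw [tcpRate_mul_sub_self hc hα.le]
    positivity
  linarith [(pos_iff_pos_of_mul_pos hprod).mp (tcpRate_pos hc)]

lemma tcpRate_lt (hc : 0 < c) (hα : 0 < α) : tcpRate α c < c + Real.sqrt (2 * α) := by
  have hgap : 0 < tcpRate α c - c := sub_pos.mpr (lt_tcpRate hc hα)
  have hsq : (tcpRate α c - c) ^ 2 < 2 * α := by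
    rw [← tcpRate_mul_sub_self hc hα.le]
    nlinarith
  linarith [(Real.lt_sqrt hgap.le).mpr hsq]

end LQF

theorem lqf_udp_loss_rate_bounds (α C X : ℝ) (hα : 0 < α)
    (hX0 : 0 < X) (hXC : X < C) :
    C * X / (C + Real.sqrt (2 * α)) <
      C * X / (X + ((C - X) / 2) * (1 + Real.sqrt (1 + 8 * α / (C - X) ^ 2))) ∧
    C * X / (X + ((C - X) / 2) * (1 + Real.sqrt (1 + 8 * α / (C - X) ^ 2))) < X := by
  have hc : 0 < C - X := sub_pos.mpr hXC
  have hCX : 0 < C * X := mul_pos (hX0.trans hXC) hX0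
  have hlower := LQF.lt_tcpRate hc hα
  have hupper := LQF.tcpRate_lt hc hα
  have hA : 0 < X + LQF.tcpRate α (C - X) := add_pos hX0 (LQF.tcpRate_pos hc)
  unfold LQF.tcpRate at hlower hupper hA
  constructor
  · exact div_lt_div_of_pos_left hCX hA (by linarith)
  · rw [div_lt_iff₀ hA]
    nlinarith
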